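/- Let a : ℝⁿ × ℝ → ℝ be continuous with bounds 0 < α ≤ a ≤ β and let b : ℝⁿ × ℝ → ℝⁿ be continuous with α − |b(x,t)| ≥ η > 0 for all (x,t). Define the drift reachable set R_t(x) via paths γ with |γ'(r) − b(γ(r), r)| ≤ a(γ(r), r) a.e. Then for all x and t ≥ 0, the closed ball B̄_{tη}(x) is contained in R_t(x), and R_t(x) ⊆ B̄_{t(β + α − η)}(x). -/

import Mathlib

/-!
Since `‖b‖ + η ≤ α ≤ a`, every constant velocity of norm at most `η` is admissible, so straight
segments reach the ball of radius `t η`. Conversely an admissible velocity has norm at most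
`‖b‖ + a ≤ β + α - η`, and a Lipschitz curve whose a.e. speed is at most `M` moves at most
`M t` in time `t`: cover `[0, t]` up to a null set by disjoint intervals on which the slope is
close to the derivative (Vitali) and use absolute continuity on the gaps.
-/

open Metric Set MeasureTheory Pointwise

noncomputable section

/-- An admissible path for the drift control system on `[s,t]`: a Lipschitz curve whose
a.e. derivative satisfies `|γ'(r) - b(γ(r), r)| ≤ a(γ(r), r)`. -/
def AdmissibleDrift {n : ℕ} (a : EuclideanSpace ℝ (Fin n) → ℝ → ℝ)
    (b : EuclideanSpace ℝ (Fin n) → ℝ → EuclideanSpace ℝ (Fin n)) (s t : ℝ)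
    (γ : ℝ → EuclideanSpace ℝ (Fin n)) : Prop :=
  (∃ C : NNReal, LipschitzOnWith C γ (Set.Icc s t)) ∧
  ∀ᵐ r ∂(MeasureTheory.volume.restrict (Set.Ioo s t)),
    ∃ v, HasDerivAt γ v r ∧ ‖v - b (γ r) r‖ ≤ a (γ r) r

/-- The reachable set at time `t` starting from `x` at time `0` for the drift system. -/
def ReachDrift {n : ℕ} (a : EuclideanSpace ℝ (Fin n) → ℝ → ℝ)
    (b : EuclideanSpace ℝ (Fin n) → ℝ → EuclideanSpace ℝ (Fin n)) (t : ℝ)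
    (x : EuclideanSpace ℝ (Fin n)) : Set (EuclideanSpace ℝ (Fin n)) :=
  {y | ∃ γ, AdmissibleDrift a b 0 t γ ∧ γ 0 = x ∧ γ t = y}

theorem dist_eq_mul_norm_slope {F : Type*} [NormedAddCommGroup F] [NormedSpace ℝ F]
    (f : ℝ → F) {x y : ℝ} (hxy : x ≤ y) : dist (f x) (f y) = (y - x) * ‖slope f x y‖ := by
  rw [← abs_of_nonneg (sub_nonneg.2 hxy), ← Real.norm_eq_abs, ← norm_smul, sub_smul_slope,
    dist_eq_norm', vsub_eq_sub]

theorem AbsolutelyContinuousOnInterval.dist_le_mul_of_ae_norm_deriv_le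
    {F : Type*} [NormedAddCommGroup F] [NormedSpace ℝ F] {f : ℝ → F} {a b M : ℝ}
    (hab : a ≤ b) (hf : AbsolutelyContinuousOnInterval f a b) (hM : 0 ≤ M)
    (hf' : ∀ᵐ x, x ∈ Ioo a b → ∃ v, HasDerivAt f v x ∧ ‖v‖ ≤ M) :
    dist (f a) (f b) ≤ M * (b - a) := by
  rcases hab.eq_or_lt with rfl | hab
  · simp
  refine le_of_forall_pos_le_add fun ε hε => ?_
  -- `f'` need only be a derivative a.e.; elsewhere it is `0`, so that `‖f'‖ ≤ M` everywhere.
  let f' x := if ‖deriv f x‖ ≤ M then deriv f x else 0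
  have hf'M x : ‖f' x‖ ≤ M := by unfold f'; split_ifs <;> simp_all
  have hderiv : ∀ᵐ x, x ∈ Ioo a b → HasDerivAt f (f' x) x := by
    filter_upwards [hf'] with x hx hxab
    obtain ⟨v, hv, hvM⟩ := hx hxab
    simpa [f', hv.deriv, hvM] using hv
  obtain ⟨u, hu, hdisj, hlen⟩ := exists_dist_slope_lt_pairwiseDisjoint_hasSum hab.le hderiv
    (div_pos hε (sub_pos.2 hab))
  have hpiece (z : u) : dist (f z.1.1) (f z.1.2) ≤ (M + ε / (b - a)) * (z.1.2 - z.1.1) := by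
    obtain ⟨⟨-, hz, -⟩, hslope⟩ := hu z z.2
    rw [dist_eq_norm] at hslope
    rw [dist_eq_mul_norm_slope f hz.le, mul_comm]
    gcongr
    linarith [norm_le_norm_add_norm_sub' (slope f z.1.1 z.1.2) (f' z.1.1), hf'M z.1.1]
  have hsum : Summable fun z : u => dist (f z.1.1) (f z.1.2) :=
    .of_nonneg_of_le (fun _ => dist_nonneg) hpiece (hlen.mul_left _).summable
  calc dist (f a) (f b) ≤ ∑' z : u, dist (f z.1.1) (f z.1.2) :=
        hf.dist_le_of_pairwiseDisjoint_hasSum hab.le (fun z hz => (hu z hz).1) hdisj hlen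
          hsum.hasSum
    _ ≤ (M + ε / (b - a)) * (b - a) := hasSum_le hpiece hsum.hasSum (hlen.mul_left _)
    _ = M * (b - a) + ε := by field_simp

section Drift

variable {n : ℕ} {a : EuclideanSpace ℝ (Fin n) → ℝ → ℝ}
  {b : EuclideanSpace ℝ (Fin n) → ℝ → EuclideanSpace ℝ (Fin n)}

theorem AdmissibleDrift.dist_le {s t M : ℝ} {γ : ℝ → EuclideanSpace ℝ (Fin n)}
    (hγ : AdmissibleDrift a b s t γ) (hst : s ≤ t) (hM : 0 ≤ M)
    (hab : ∀ y r, ‖b y r‖ + a y r ≤ M) : dist (γ s) (γ t) ≤ M * (t - s) := by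
  obtain ⟨⟨C, hC⟩, hderiv⟩ := hγ
  rw [← uIcc_of_le hst] at hC
  rw [ae_restrict_iff' measurableSet_Ioo] at hderiv
  refine hC.absolutelyContinuousOnInterval.dist_le_mul_of_ae_norm_deriv_le hst hM ?_
  filter_upwards [hderiv] with r hr hrst
  obtain ⟨v, hv, hvb⟩ := hr hrst
  exact ⟨v, hv, by linarith [norm_le_norm_add_norm_sub' v (b (γ r) r), hab (γ r) r]⟩

theorem admissibleDrift_affine {s t : ℝ} (x v : EuclideanSpace ℝ (Fin n))
    (hv : ∀ y r, ‖v‖ + ‖b y r‖ ≤ a y r) : AdmissibleDrift a b s t (fun r => x + r • v) := by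
  refine ⟨⟨‖v‖₊, (LipschitzWith.of_dist_le_mul fun p q => ?_).lipschitzOnWith⟩,
    .of_forall fun r => ⟨v, ?_, ?_⟩⟩
  · rw [dist_add_left, dist_eq_norm, ← sub_smul, norm_smul, mul_comm, coe_nnnorm, Real.norm_eq_abs,
      Real.dist_eq]
  · simpa using ((hasDerivAt_id r).smul_const v).const_add x
  · exact (norm_sub_le _ _).trans (hv _ r)

theorem closedBall_subset_reachDrift {c t : ℝ} (x : EuclideanSpace ℝ (Fin n)) (ht : 0 ≤ t)
    (hc : 0 ≤ c) (hab : ∀ y r, c + ‖b y r‖ ≤ a y r) :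
    Metric.closedBall x (t * c) ⊆ ReachDrift a b t x := by
  intro y hy
  rcases ht.eq_or_lt with rfl | ht
  · obtain rfl : y = x := by simpa using hy
    refine ⟨fun r => y + r • 0, admissibleDrift_affine y 0 fun z r => ?_, by simp, by simp⟩
    linarith [hab z r, norm_zero (E := EuclideanSpace ℝ (Fin n))]
  · set v := t⁻¹ • (y - x)
    have hv : ‖v‖ ≤ c := by
      rw [norm_smul, norm_inv, Real.norm_of_nonneg ht.le, inv_mul_le_iff₀ ht, ← dist_eq_norm]
      exact hy
    refine ⟨fun r => x + r • v, admissibleDrift_affine x v fun z r => ?_, by simp, ?_⟩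
    · linarith [hab z r]
    · simp [v, smul_smul, ht.ne']

theorem reachDrift_subset_closedBall {M t : ℝ} (x : EuclideanSpace ℝ (Fin n)) (ht : 0 ≤ t)
    (hM : 0 ≤ M) (hab : ∀ y r, ‖b y r‖ + a y r ≤ M) :
    ReachDrift a b t x ⊆ Metric.closedBall x (t * M) := by
  rintro y ⟨γ, hγ, rfl, rfl⟩
  simpa [mul_comm, dist_comm] using hγ.dist_le ht hM hab

end Drift

theorem reachDrift_ball_bounds_general {n : ℕ} (a : EuclideanSpace ℝ (Fin n) → ℝ → ℝ)
    (b : EuclideanSpace ℝ (Fin n) → ℝ → EuclideanSpace ℝ (Fin n))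
    (α β η : ℝ) (hη : 0 < η)
    (habd : ∀ x t, α ≤ a x t ∧ a x t ≤ β)
    (hbbd : ∀ x t, η ≤ α - ‖b x t‖)
    (x : EuclideanSpace ℝ (Fin n)) (t : ℝ) (ht : 0 ≤ t) :
    Metric.closedBall x (t * η) ⊆ ReachDrift a b t x ∧
      ReachDrift a b t x ⊆ Metric.closedBall x (t * (β + α - η)) := by
  refine ⟨closedBall_subset_reachDrift x ht hη.le fun y r => ?_,
    reachDrift_subset_closedBall x ht ?_ fun y r => ?_⟩
  · linarith [hbbd y r, (habd y r).1]
  · linarith [hbbd x 0, norm_nonneg (b x 0), habd x 0]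
  · linarith [hbbd y r, (habd y r).2]

theorem reachDrift_ball_bounds {n : ℕ} (a : EuclideanSpace ℝ (Fin n) → ℝ → ℝ)
    (b : EuclideanSpace ℝ (Fin n) → ℝ → EuclideanSpace ℝ (Fin n))
    (α β η : ℝ) (hα : 0 < α) (hαβ : α ≤ β) (hη : 0 < η)
    (hacont : Continuous (fun p : EuclideanSpace ℝ (Fin n) × ℝ => a p.1 p.2))
    (hbcont : Continuous (fun p : EuclideanSpace ℝ (Fin n) × ℝ => b p.1 p.2))
    (habd : ∀ x t, α ≤ a x t ∧ a x t ≤ β)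
    (hbbd : ∀ x t, η ≤ α - ‖b x t‖)
    (x : EuclideanSpace ℝ (Fin n)) (t : ℝ) (ht : 0 ≤ t) :
    Metric.closedBall x (t * η) ⊆ ReachDrift a b t x ∧
      ReachDrift a b t x ⊆ Metric.closedBall x (t * (β + α - η)) :=
  reachDrift_ball_bounds_general a b α β η hη habd hbbd x t ht
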